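/- (Theorem 5.2, bound (5.6), deterministic form.) Under the stated hypotheses, ‖α* − x‖₂ ≤ (1/(√(1−δ) f_T(λ_k))) · (2 + M_max f_T(λ_{k+1})/√(γ g(σ_{k+1}))) · ‖D e‖₂ + (1/(√(1−δ) f_T(λ_k))) · (M_max f_T(λ_{k+1}) √(g(σ_k)/g(σ_{k+1})) + √(γ g(σ_k))) · ‖x‖₂. -/

import Mathlib

/-!
In the eigenbasis `u` both `A` and `G` are diagonal. Testing the minimality of `x*` against the
true signal `x`, and using that `x` lives on `u_1, …, u_k` while `β* = x* − α*` lives on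
`u_{k+1}, …, u_n`, gives
`‖Φπ(x*) − Dy‖² + γ g(σ_{k+1}) ‖β*‖² ≤ ‖De‖² + γ g(σ_k) ‖x‖²`,
which bounds both the residual and `‖β*‖` by `‖De‖ + √(γ g(σ_k)) ‖x‖`. Since
`Φπ(α* − x) = (Φπ(x*) − Dy) + De − Φπ(β*)` and `‖Φπ(β*)‖ ≤ M_max f_T(λ_{k+1}) ‖β*‖`, the lower
frame bound on `span{u_1, …, u_k}` turns this into the bound on `‖α* − x‖`.
-/

open scoped BigOperators Matrix

/-- `f_T(λ) = √(Σ_{t=0}^{T-1} λ^{2t})`. -/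
noncomputable def fT (T : ℕ) (l : ℝ) : ℝ := Real.sqrt (∑ t ∈ Finset.range T, l ^ (2 * t))

open Matrix Finset

lemma fT_sq (T : ℕ) (l : ℝ) : fT T l ^ 2 = ∑ t ∈ range T, l ^ (2 * t) :=
  Real.sq_sqrt (sum_nonneg fun t _ => by rw [pow_mul']; positivity)

lemma fT_pos {T : ℕ} (hT : 0 < T) (l : ℝ) : 0 < fT T l := by
  refine Real.sqrt_pos.mpr (lt_of_lt_of_le one_pos ?_)
  have h := single_le_sum (f := fun t => l ^ (2 * t))
    (fun t _ => by rw [pow_mul']; positivity) (mem_range.mpr hT)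
  simpa using h

lemma fT_nonneg (T : ℕ) (l : ℝ) : 0 ≤ fT T l := Real.sqrt_nonneg _

lemma sqrt_sum_sq_eq_norm {ι : Type*} [Fintype ι] (f : ι → ℝ) :
    √(∑ i, f i ^ 2) = ‖WithLp.toLp 2 f‖ := by
  simp [EuclideanSpace.norm_eq]

lemma sqrt_sum_sq_add_sub_le {ι : Type*} [Fintype ι] (f g h : ι → ℝ) :
    √(∑ i, (f i + g i - h i) ^ 2) ≤ √(∑ i, f i ^ 2) + √(∑ i, g i ^ 2) + √(∑ i, h i ^ 2) := by
  simp only [sqrt_sum_sq_eq_norm]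
  calc ‖WithLp.toLp 2 (f + g - h)‖ ≤ ‖WithLp.toLp 2 f + WithLp.toLp 2 g‖ + ‖WithLp.toLp 2 h‖ :=
        norm_sub_le _ _
    _ ≤ _ := by gcongr; exact norm_add_le _ _

section Spectral

variable {n : ℕ} {U : Matrix (Fin n) (Fin n) ℝ}

lemma sum_sq_mulVec_of_transpose_mul_eq_one (hU : Uᵀ * U = 1) (v : Fin n → ℝ) :
    ∑ j, (U *ᵥ v) j ^ 2 = ∑ a, v a ^ 2 := by
  have h : (U *ᵥ v) ⬝ᵥ (U *ᵥ v) = v ⬝ᵥ v := by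
    rw [dotProduct_mulVec, ← vecMul_transpose, vecMul_vecMul, hU, vecMul_one]
  simpa [dotProduct, sq] using h

lemma eq_transpose_mul_diagonal_mul {B : Matrix (Fin n) (Fin n) ℝ} {w : Fin n → ℝ}
    (hB : ∀ a b, B a b = ∑ j, w j * U j a * U j b) : B = Uᵀ * diagonal w * U := by
  ext a b
  rw [hB, mul_apply]
  simp only [mul_diagonal, transpose_apply]
  exact sum_congr rfl fun j _ => by ring

lemma transpose_mul_mul_pow (hU : U * Uᵀ = 1) (D : Matrix (Fin n) (Fin n) ℝ) (t : ℕ) :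
    (Uᵀ * D * U) ^ t = Uᵀ * D ^ t * U := by
  induction t with
  | zero => rw [pow_zero, pow_zero, Matrix.mul_one, mul_eq_one_comm.mp hU]
  | succ t ih =>
    calc (Uᵀ * D * U) ^ (t + 1) = Uᵀ * D ^ t * (U * Uᵀ) * D * U := by
          rw [pow_succ, ih]; simp only [Matrix.mul_assoc]
      _ = Uᵀ * D ^ (t + 1) * U := by simp only [hU, Matrix.mul_one, pow_succ, Matrix.mul_assoc]

lemma mulVec_conj_diagonal (hU : U * Uᵀ = 1) (w v : Fin n → ℝ) (j : Fin n) :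
    (U *ᵥ ((Uᵀ * diagonal w * U) *ᵥ v)) j = w j * (U *ᵥ v) j := by
  rw [mulVec_mulVec, ← Matrix.mul_assoc, ← Matrix.mul_assoc, hU, Matrix.one_mul,
    ← mulVec_mulVec, mulVec_diagonal]

lemma dotProduct_conj_diagonal_mulVec (w v : Fin n → ℝ) :
    v ⬝ᵥ ((Uᵀ * diagonal w * U) *ᵥ v) = ∑ j, w j * (U *ᵥ v) j ^ 2 := by
  simp only [← mulVec_mulVec]
  rw [dotProduct_mulVec, vecMul_transpose]
  simp only [dotProduct, mulVec_diagonal]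
  exact sum_congr rfl fun j _ => by ring

lemma sum_sq_pow_mulVec_le (hU : U * Uᵀ = 1) {w v : Fin n → ℝ} {m : ℝ}
    (hm : ∀ j, (U *ᵥ v) j ≠ 0 → |w j| ≤ m) (t : ℕ) :
    ∑ a, ((Uᵀ * diagonal w * U) ^ t *ᵥ v) a ^ 2 ≤ m ^ (2 * t) * ∑ a, v a ^ 2 := by
  have hUt := mul_eq_one_comm.mp hU
  rw [transpose_mul_mul_pow hU, diagonal_pow, ← sum_sq_mulVec_of_transpose_mul_eq_one hUt,
    ← sum_sq_mulVec_of_transpose_mul_eq_one hUt v, mul_sum]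
  refine sum_le_sum fun j _ => ?_
  rw [mulVec_conj_diagonal hU, Pi.pow_apply, mul_pow]
  by_cases hj : (U *ᵥ v) j = 0
  · simp [hj]
  have hpow : (w j ^ t) ^ 2 = |w j| ^ (2 * t) := by rw [mul_comm, pow_mul, pow_abs, sq_abs]
  rw [hpow]
  gcongr
  exact hm j hj

lemma sqrt_sum_sq_orbit_le (hU : U * Uᵀ = 1) {w v : Fin n → ℝ} {m : ℝ}
    (hm : ∀ j, (U *ᵥ v) j ≠ 0 → |w j| ≤ m) (T : ℕ) :
    √(∑ q : Fin T × Fin n, ((Uᵀ * diagonal w * U) ^ (q.1 : ℕ) *ᵥ v) q.2 ^ 2)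
      ≤ fT T m * √(∑ a, v a ^ 2) := by
  calc _ ≤ √(fT T m ^ 2 * ∑ a, v a ^ 2) := by
        refine Real.sqrt_le_sqrt ?_
        rw [fT_sq, sum_mul, ← Fin.sum_univ_eq_sum_range, Fintype.sum_prod_type]
        exact sum_le_sum fun t _ => sum_sq_pow_mulVec_le hU hm t
    _ = fT T m * √(∑ a, v a ^ 2) := by
        rw [Real.sqrt_mul (sq_nonneg _), Real.sqrt_sq (fT_nonneg T m)]

lemma dotProduct_conj_diagonal_mulVec_le (hU : Uᵀ * U = 1) {w v : Fin n → ℝ} {m : ℝ}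
    (hm : ∀ j, (U *ᵥ v) j ≠ 0 → w j ≤ m) :
    v ⬝ᵥ ((Uᵀ * diagonal w * U) *ᵥ v) ≤ m * ∑ a, v a ^ 2 := by
  rw [dotProduct_conj_diagonal_mulVec, ← sum_sq_mulVec_of_transpose_mul_eq_one hU, mul_sum]
  refine sum_le_sum fun j _ => ?_
  by_cases hj : (U *ᵥ v) j = 0
  · simp [hj]
  exact mul_le_mul_of_nonneg_right (hm j hj) (sq_nonneg _)

lemma le_dotProduct_conj_diagonal_mulVec (hU : Uᵀ * U = 1) {w v : Fin n → ℝ} {m : ℝ}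
    (hm : ∀ j, (U *ᵥ v) j ≠ 0 → m ≤ w j) :
    m * ∑ a, v a ^ 2 ≤ v ⬝ᵥ ((Uᵀ * diagonal w * U) *ᵥ v) := by
  rw [dotProduct_conj_diagonal_mulVec, ← sum_sq_mulVec_of_transpose_mul_eq_one hU, mul_sum]
  refine sum_le_sum fun j _ => ?_
  by_cases hj : (U *ᵥ v) j = 0
  · simp [hj]
  exact mul_le_mul_of_nonneg_right (hm j hj) (sq_nonneg _)

lemma dotProduct_conj_diagonal_mulVec_mono {w v v' : Fin n → ℝ} (hw : ∀ j, 0 ≤ w j)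
    (h : ∀ j, (U *ᵥ v) j ^ 2 ≤ (U *ᵥ v') j ^ 2) :
    v ⬝ᵥ ((Uᵀ * diagonal w * U) *ᵥ v) ≤ v' ⬝ᵥ ((Uᵀ * diagonal w * U) *ᵥ v') := by
  simp only [dotProduct_conj_diagonal_mulVec]
  exact sum_le_sum fun j _ => mul_le_mul_of_nonneg_left (h j) (hw j)

lemma mulVec_row (hU : U * Uᵀ = 1) (r : Fin n) : U *ᵥ U r = Pi.single r 1 := by
  ext j
  have h := congrFun (congrFun hU j) r
  simp only [mul_apply, transpose_apply, one_apply] at h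
  simp only [mulVec, dotProduct, Pi.single_apply, h]

lemma mulVec_apply_eq_zero_of_mem_span (hU : U * Uᵀ = 1) {ι : Type*} (f : ι → Fin n)
    {v : Fin n → ℝ} (hv : v ∈ Submodule.span ℝ (Set.range fun i => U (f i))) {j : Fin n}
    (hj : j ∉ Set.range f) : (U *ᵥ v) j = 0 := by
  have hspan : Submodule.span ℝ (Set.range fun i => U (f i))
      ≤ LinearMap.ker ((LinearMap.proj j).comp U.mulVecLin) := by
    rw [Submodule.span_le]
    rintro _ ⟨i, rfl⟩
    have hji : j ≠ f i := fun h => hj ⟨i, h.symm⟩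
    simp [mulVec_row hU, hji]
  simpa using hspan hv

lemma mulVec_sum_smul_rows (hU : U * Uᵀ = 1) {ι : Type*} [Fintype ι] {f : ι → Fin n}
    (hf : Function.Injective f) (a : ι → ℝ) (i : ι) :
    (U *ᵥ ∑ i', a i' • U (f i')) (f i) = a i := by
  classical
  simp [mulVec_sum, mulVec_smul, mulVec_row hU, Pi.single_apply, hf.eq_iff]

lemma mulVec_sub_sum_smul_rows (hU : U * Uᵀ = 1) {ι : Type*} [Fintype ι] {f : ι → Fin n}
    (hf : Function.Injective f) (v : Fin n → ℝ) (j : Fin n) :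
    (U *ᵥ (v - ∑ i, (U *ᵥ v) (f i) • U (f i))) j
      = if j ∈ Set.range f then 0 else (U *ᵥ v) j := by
  rw [mulVec_sub, Pi.sub_apply]
  split_ifs with hj
  · obtain ⟨i, rfl⟩ := hj
    rw [mulVec_sum_smul_rows hU hf, sub_self]
  · rw [mulVec_apply_eq_zero_of_mem_span hU f
      ((Submodule.mem_span_range_iff_exists_fun ℝ).mpr ⟨_, rfl⟩) hj, sub_zero]

lemma mulVec_sub_sum_smul_rows_ne_zero (hU : U * Uᵀ = 1) {ι : Type*} [Fintype ι]
    {f : ι → Fin n} (hf : Function.Injective f) {v : Fin n → ℝ} {j : Fin n}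
    (hj : (U *ᵥ (v - ∑ i, (U *ᵥ v) (f i) • U (f i))) j ≠ 0) : j ∉ Set.range f := by
  rw [mulVec_sub_sum_smul_rows hU hf] at hj
  split_ifs at hj with h
  exacts [absurd rfl hj, h]

lemma sq_mulVec_sub_sum_smul_rows_le (hU : U * Uᵀ = 1) {ι : Type*} [Fintype ι]
    {f : ι → Fin n} (hf : Function.Injective f) (v : Fin n → ℝ) (j : Fin n) :
    (U *ᵥ (v - ∑ i, (U *ᵥ v) (f i) • U (f i))) j ^ 2 ≤ (U *ᵥ v) j ^ 2 := by
  rw [mulVec_sub_sum_smul_rows hU hf]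
  split_ifs <;> simp [sq_nonneg]

end Spectral

lemma le_of_penalized_fit {R E X B K c err γ g₀ g₁ : ℝ} (hR : 0 ≤ R) (hE : 0 ≤ E) (hX : 0 ≤ X)
    (hB : 0 ≤ B) (hc : 0 < c) (hK : 0 ≤ K) (hγ : 0 < γ) (hg₀ : 0 ≤ g₀) (hg₁ : 0 < g₁)
    (hfit : R + γ * g₁ * B ≤ E + γ * g₀ * X) (herr : c * err ≤ √R + √E + K * √B) :
    err ≤ 1 / c * (2 + K / √(γ * g₁)) * √E
      + 1 / c * (K * √(g₀ / g₁) + √(γ * g₀)) * √X := by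
  set S := √E + √(γ * g₀) * √X
  have hq : 0 < √(γ * g₁) := Real.sqrt_pos.mpr (by positivity)
  have hS : E + γ * g₀ * X ≤ S ^ 2 := by
    have h := mul_nonneg (mul_nonneg (Real.sqrt_nonneg E) (Real.sqrt_nonneg (γ * g₀)))
      (Real.sqrt_nonneg X)
    rw [add_sq, mul_pow, Real.sq_sqrt hE, Real.sq_sqrt hX, Real.sq_sqrt (by positivity)]
    linarith
  have hS0 : 0 ≤ S := by positivity
  have hpen : 0 ≤ γ * g₁ * B := by positivity
  have hRS : √R ≤ S := Real.sqrt_le_iff.mpr ⟨hS0, by linarith⟩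
  have hBS : √B ≤ S / √(γ * g₁) := by
    rw [le_div_iff₀ hq, ← Real.sqrt_mul hB]
    exact Real.sqrt_le_iff.mpr ⟨hS0, by linarith⟩
  have hratio : √(g₀ / g₁) = √(γ * g₀) / √(γ * g₁) := by
    rw [← Real.sqrt_div' _ (by positivity : 0 ≤ γ * g₁), mul_div_mul_left _ _ hγ.ne']
  have hcerr : c * err ≤ S + √E + K * (S / √(γ * g₁)) := by
    have := mul_le_mul_of_nonneg_left hBS hK
    linarith
  rw [hratio]
  calc err ≤ (S + √E + K * (S / √(γ * g₁))) / c := (le_div_iff₀' hc).mpr hcerr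
    _ = _ := by ring

lemma tikhonov_error_le {κ ι : Type*} [Fintype κ] [Fintype ι] (P : (κ → ℝ) →+ (ι → ℝ))
    (pen : (κ → ℝ) → ℝ) {x xstar α : κ → ℝ} {b w : ι → ℝ} {γ g₀ g₁ K c : ℝ}
    (hc : 0 < c) (hK : 0 ≤ K) (hγ : 0 < γ) (hg₀ : 0 ≤ g₀) (hg₁ : 0 < g₁)
    (hb : ∀ i, b i = P x i + w i)
    (hmin : ∑ i, (P xstar i - b i) ^ 2 + γ * pen xstar ≤ ∑ i, (P x i - b i) ^ 2 + γ * pen x)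
    (hpen : pen x ≤ g₀ * ∑ a, x a ^ 2) (hpen' : g₁ * ∑ a, (xstar - α) a ^ 2 ≤ pen xstar)
    (hPβ : √(∑ i, P (xstar - α) i ^ 2) ≤ K * √(∑ a, (xstar - α) a ^ 2))
    (hframe : c * √(∑ a, (α - x) a ^ 2) ≤ √(∑ i, P (α - x) i ^ 2)) :
    √(∑ a, (α a - x a) ^ 2) ≤ 1 / c * (2 + K / √(γ * g₁)) * √(∑ i, w i ^ 2)
      + 1 / c * (K * √(g₀ / g₁) + √(γ * g₀)) * √(∑ a, x a ^ 2) := by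
  have hres : ∀ i, P x i - b i = -w i := fun i => by rw [hb]; ring
  have hfit : ∑ i, (P xstar i - b i) ^ 2 + γ * g₁ * ∑ a, (xstar - α) a ^ 2
      ≤ ∑ i, w i ^ 2 + γ * g₀ * ∑ a, x a ^ 2 := by
    simp only [hres, neg_sq] at hmin
    nlinarith [mul_le_mul_of_nonneg_left hpen hγ.le, mul_le_mul_of_nonneg_left hpen' hγ.le]
  have hsplit : ∀ i, P (α - x) i = (P xstar i - b i) + w i - P (xstar - α) i := fun i => by
    simp only [map_sub, Pi.sub_apply, hb]
    ring
  have herr : c * √(∑ a, (α a - x a) ^ 2)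
      ≤ √(∑ i, (P xstar i - b i) ^ 2) + √(∑ i, w i ^ 2) + K * √(∑ a, (xstar - α) a ^ 2) := by
    refine hframe.trans ?_
    simp only [hsplit]
    exact (sqrt_sum_sq_add_sub_le _ _ _).trans (add_le_add_right hPβ _)
  exact le_of_penalized_fit (by positivity) (by positivity) (by positivity) (by positivity)
    hc hK hγ hg₀ hg₁ hfit herr

/-- `Φ ∘ π_{A,T}` in the paper's notation. -/
def sampledTrajectory {n M T : ℕ} (A : Matrix (Fin n) (Fin n) ℝ) (s : Fin M → Fin T × Fin n)
    (d : Fin M → ℝ) : (Fin n → ℝ) →+ (Fin M → ℝ) :=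
  AddMonoidHom.mk' (fun v i => d i * (A ^ ((s i).1 : ℕ) *ᵥ v) (s i).2) fun v w => by
    ext i
    simp [mulVec_add, mul_add]

lemma of_mul_transpose_eq_one {n : ℕ} {u : Fin n → Fin n → ℝ}
    (hu : ∀ i j, ∑ a, u i a * u j a = if i = j then 1 else 0) : of u * (of u)ᵀ = 1 := by
  ext i j
  simpa [mul_apply, one_apply] using hu i j

/-- Theorem 5.2, bound (5.6), deterministic form. Space-time nodes are
pairs `q = (t,i)`, `(π_{A,T}(x))(q) = (A^{q.1} x)(q.2)`, `(Φ v)_i = d_i v(s(i))` and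
`(D e)_i = d_i e_i`, `A = Σ_j λ_j u_j u_jᵀ`, `G = Σ_j g(σ_j) u_j u_jᵀ`.  With the
0-based indexing, `λ_k, σ_k` are `lam ⟨k-1⟩, sig ⟨k-1⟩` and `λ_{k+1}, σ_{k+1}` are
`lam ⟨k⟩, sig ⟨k⟩`.  If `x*` minimizes
`x̃ ↦ ‖Φπ_{A,T}(x̃) − Dy‖₂² + γ x̃ᵀGx̃` over `ℝ^n`, and `α*` is the orthogonal
projection of `x*` onto `span{u_1,…,u_k}`, then
`‖α* − x‖₂ ≤ (1/(√(1-δ) f_T(λ_k)))·(2 + M_max f_T(λ_{k+1})/√(γ g(σ_{k+1})))·‖De‖₂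
 + (1/(√(1-δ) f_T(λ_k)))·(M_max f_T(λ_{k+1})√(g(σ_k)/g(σ_{k+1})) + √(γ g(σ_k)))·‖x‖₂`. -/
theorem stmt14 (n k T M : ℕ) (hT : 0 < T) (hkn : k < n)
    (u : Fin n → Fin n → ℝ)
    (hu : ∀ i j : Fin n, ∑ a, u i a * u j a = if i = j then 1 else 0)
    (lam : Fin n → ℝ)
    (hmono : ∀ i j : Fin n, i ≤ j → lam j ≤ lam i)
    (hnn : ∀ j, 0 ≤ lam j)
    (sig : Fin n → ℝ)
    (A : Matrix (Fin n) (Fin n) ℝ)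
    (hAdef : ∀ a b, A a b = ∑ j, lam j * u j a * u j b)
    (g : ℝ → ℝ) (hg0 : ∀ j, 0 ≤ g (sig j))
    (hgmono : ∀ i j : Fin n, i ≤ j → g (sig i) ≤ g (sig j))
    (hgk1 : 0 < g (sig ⟨k, hkn⟩))
    (G : Matrix (Fin n) (Fin n) ℝ)
    (hGdef : ∀ a b, G a b = ∑ j, g (sig j) * u j a * u j b)
    (s : Fin M → Fin T × Fin n) (d : Fin M → ℝ)
    (γ : ℝ) (hγ : 0 < γ) (δ : ℝ) (hδ1 : δ < 1)
    (Mmax : ℝ) (hMmax : 0 < Mmax)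
    (hMbd : ∀ v : Fin T × Fin n → ℝ,
      Real.sqrt (∑ i, (d i * v (s i)) ^ 2) ≤ Mmax * Real.sqrt (∑ q, v q ^ 2))
    (hframe : ∀ v ∈ Submodule.span ℝ
        (Set.range fun j : Fin k => u (Fin.castLE hkn.le j)),
      Real.sqrt (1 - δ) * fT T (lam ⟨k - 1, by omega⟩) * Real.sqrt (∑ a, v a ^ 2)
        ≤ Real.sqrt (∑ i, (d i * ((A ^ ((s i).1 : ℕ)).mulVec v) (s i).2) ^ 2))
    (x : Fin n → ℝ)
    (hx : x ∈ Submodule.span ℝ (Set.range fun j : Fin k => u (Fin.castLE hkn.le j)))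
    (e : Fin M → ℝ) (y : Fin M → ℝ)
    (hy : ∀ i, y i = ((A ^ ((s i).1 : ℕ)).mulVec x) (s i).2 + e i)
    (xstar : Fin n → ℝ)
    (hmin : ∀ z : Fin n → ℝ,
      (∑ i, (d i * ((A ^ ((s i).1 : ℕ)).mulVec xstar) (s i).2 - d i * y i) ^ 2)
          + γ * ∑ a, xstar a * G.mulVec xstar a
        ≤ (∑ i, (d i * ((A ^ ((s i).1 : ℕ)).mulVec z) (s i).2 - d i * y i) ^ 2)
          + γ * ∑ a, z a * G.mulVec z a)
    (αstar : Fin n → ℝ)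
    (hα : ∀ a, αstar a = ∑ j : Fin k,
      (∑ b, u (Fin.castLE hkn.le j) b * xstar b) * u (Fin.castLE hkn.le j) a) :
    Real.sqrt (∑ a, (αstar a - x a) ^ 2)
      ≤ 1 / (Real.sqrt (1 - δ) * fT T (lam ⟨k - 1, by omega⟩))
          * (2 + Mmax * fT T (lam ⟨k, hkn⟩) / Real.sqrt (γ * g (sig ⟨k, hkn⟩)))
          * Real.sqrt (∑ i, (d i * e i) ^ 2)
        + 1 / (Real.sqrt (1 - δ) * fT T (lam ⟨k - 1, by omega⟩))
          * (Mmax * fT T (lam ⟨k, hkn⟩)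
              * Real.sqrt (g (sig ⟨k - 1, by omega⟩) / g (sig ⟨k, hkn⟩))
            + Real.sqrt (γ * g (sig ⟨k - 1, by omega⟩)))
          * Real.sqrt (∑ a, x a ^ 2) := by
  set U : Matrix (Fin n) (Fin n) ℝ := of u
  have hUUt : U * Uᵀ = 1 := of_mul_transpose_eq_one hu
  have hUtU : Uᵀ * U = 1 := mul_eq_one_comm.mp hUUt
  have hG : G = Uᵀ * diagonal (fun j => g (sig j)) * U := eq_transpose_mul_diagonal_mul hGdef
  have hαstar : αstar = ∑ i, (U *ᵥ xstar) (Fin.castLE hkn.le i) • U (Fin.castLE hkn.le i) := by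
    ext a
    simp [hα a, Finset.sum_apply, U, mulVec, dotProduct]
  have hαmem : αstar ∈ Submodule.span ℝ (Set.range fun j : Fin k => u (Fin.castLE hkn.le j)) :=
    (Submodule.mem_span_range_iff_exists_fun ℝ).mpr ⟨_, hαstar.symm⟩
  have hβhigh : ∀ j, (U *ᵥ (xstar - αstar)) j ≠ 0 → ⟨k, hkn⟩ ≤ j := fun j hj => by
    rw [hαstar] at hj
    simpa [Fin.range_castLE, Fin.le_def] using
      mulVec_sub_sum_smul_rows_ne_zero hUUt (Fin.castLE_injective _) hj
  have hxlow : ∀ j, (U *ᵥ x) j ≠ 0 → j ≤ ⟨k - 1, by omega⟩ := fun j hj => by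
    by_contra hjk
    refine hj (mulVec_apply_eq_zero_of_mem_span hUUt _ hx fun hjr => hjk ?_)
    simp only [Fin.range_castLE, Set.mem_ofPred_eq] at hjr
    exact Fin.le_def.mpr (show (j : ℕ) ≤ k - 1 by omega)
  refine tikhonov_error_le (sampledTrajectory A s d) (fun z => ∑ a, z a * (G *ᵥ z) a)
    (mul_pos (Real.sqrt_pos.mpr (by linarith)) (fT_pos hT _)) (mul_nonneg hMmax.le (fT_nonneg _ _))
    hγ (hg0 _) hgk1 (b := fun i => d i * y i) (fun i => by simp [sampledTrajectory, hy, mul_add])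
    (hmin x) ?_ ?_ ?_ (hframe _ (Submodule.sub_mem _ hαmem hx))
  · rw [hG]
    exact dotProduct_conj_diagonal_mulVec_le hUtU fun j hj => hgmono _ _ (hxlow j hj)
  · rw [hG]
    refine (le_dotProduct_conj_diagonal_mulVec hUtU fun j hj => hgmono _ _ (hβhigh j hj)).trans
      (dotProduct_conj_diagonal_mulVec_mono hg0 fun j => ?_)
    rw [hαstar]
    exact sq_mulVec_sub_sum_smul_rows_le hUUt (Fin.castLE_injective _) xstar j
  · refine (hMbd fun q => (A ^ (q.1 : ℕ) *ᵥ (xstar - αstar)) q.2).trans ?_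
    rw [mul_assoc, eq_transpose_mul_diagonal_mul hAdef]
    refine mul_le_mul_of_nonneg_left (sqrt_sum_sq_orbit_le hUUt (fun j hj => ?_) T) hMmax.le
    rw [abs_of_nonneg (hnn j)]
    exact hmono _ _ (hβhigh j hj)
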